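/- arXiv:1108.0008 — 5 statements merged into one kernel-verified Lean document; each statement's English description precedes it below -/
import Mathlib

section
/- If a set S ⊆ ℂ is locally interpolable by real-analytic curves, then the topological closure of S has empty interior. -/
open Complex Filter Finset Topology

/-- Divided differences over a list of points, evaluated at a point `w`:
`divDiff [ηₚ, …, η₁] h w = Δ_{p,(ηₚ,…,η₁)}(h)(w)`. -/
noncomputable def divDiff : List ℂ → (ℂ → ℂ) → ℂ → ℂ
  | [], h, w => h w
  | a :: l, h, w => (divDiff l h w - divDiff l h a) / (w - a)

/-- `deltaP η h p = Δ_{p,(η_p,…,η_1)}(h)(η_{p+1})` (with 0-indexed `η`,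
so the points are `η 0, …, η (p-1)` and the evaluation point is `η p`). -/
noncomputable def deltaP (η : ℕ → ℂ) (h : ℂ → ℂ) (p : ℕ) : ℂ :=
  divDiff (((List.range p).reverse).map η) h (η p)

/-- The interpolation formula `E_N(f;η)(z)` (with 0-indexed `η`, so that the
paper's points `η_1, …, η_N` are `η 0, …, η (N-1)`). -/
noncomputable def EN (η : ℕ → ℂ) (f : ℂ × ℂ → ℂ) (N : ℕ) (z : ℂ × ℂ) : ℂ :=
  ∑ p ∈ Finset.range N,
    (∏ j ∈ Finset.Ico (p + 1) N, (z.1 - η j * z.2)) *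
      ∑ q ∈ Finset.Icc p (N - 1),
        ((1 + η p * (starRingEnd ℂ) (η q)) / (1 + (Complex.normSq (η q) : ℂ))) *
          (∏ j ∈ (Finset.Icc p (N - 1)).erase q, (η q - η j))⁻¹ *
          ∑' n : ℕ,
            ((z.2 + (starRingEnd ℂ) (η q) * z.1) / (1 + (Complex.normSq (η q) : ℂ))) ^ n *
              (1 / (Nat.factorial (N - 1 - p + n) : ℂ)) *
              iteratedDeriv (N - 1 - p + n) (fun v => f (η q * v, v)) 0

/-- `E_N(f;η)` converges to `f` uniformly on every compact subset of `ℂ²` as `N → ∞`. -/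
def ENConverges (η : ℕ → ℂ) (f : ℂ × ℂ → ℂ) : Prop :=
  ∀ K : Set (ℂ × ℂ), IsCompact K →
    TendstoUniformlyOn (fun N z => EN η f N z) f Filter.atTop K

/-- A set `S ⊆ ℂ` is locally interpolable by real-analytic curves. -/
def LocallyInterpolable (S : Set ℂ) : Prop :=
  ∀ ζ ∈ closure S, ∃ V : Set ℂ, IsOpen V ∧ ζ ∈ V ∧
    ∃ g : ℂ → ℂ, DifferentiableOn ℂ g V ∧ ∀ η ∈ S ∩ V, (starRingEnd ℂ) η = g η

/-- Condition (1.2) from Theorem 1. -/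
def Cond12 (η : ℕ → ℂ) : Prop :=
  ∃ R : ℝ, 0 < R ∧ ∀ p q : ℕ,
    ‖deltaP η (fun ζ => ((starRingEnd ℂ) ζ / (1 + (Complex.normSq ζ : ℂ))) ^ q) p‖ ≤ R ^ (p + q)

open ComplexConjugate Set

/-- The `ℝ`-derivative of `conj` is `conj` itself, which is not `ℂ`-linear: it sends `1 ↦ 1`
but `I ↦ -I`. -/
theorem Complex.not_differentiableAt_conj (z : ℂ) : ¬ DifferentiableAt ℂ conj z := by
  intro hd
  have hreal : (fderiv ℂ conj z).restrictScalars ℝ = (conjCLE : ℂ →L[ℝ] ℂ) :=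
    (hd.hasFDerivAt.restrictScalars ℝ).unique conjCLE.toContinuousLinearMap.hasFDerivAt
  have h_one : fderiv ℂ conj z 1 = 1 := by
    simpa using congr($hreal 1)
  have h_I : fderiv ℂ conj z I = -I := by
    simpa using congr($hreal I)
  have h_linear : fderiv ℂ conj z I = I := by
    simpa [h_one] using (fderiv ℂ conj z).map_smul I 1
  exact I_ne_zero (by linear_combination (h_I - h_linear) / 2)

theorem Set.EqOn.inter_closure_of_isOpen {X Y : Type*} [TopologicalSpace X] [TopologicalSpace Y]
    [T2Space Y] {f g : X → Y} {S V : Set X} (hV : IsOpen V) (hf : ContinuousOn f V)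
    (hg : ContinuousOn g V) (h : EqOn f g (S ∩ V)) : EqOn f g (V ∩ closure S) :=
  h.of_subset_closure (hf.mono inter_subset_left) (hg.mono inter_subset_left)
    (fun _ hx ↦ ⟨hx.2, subset_closure hx.1⟩) (inter_comm S V ▸ hV.inter_closure)

/-- By continuity `g` agrees with `conj` on `V ∩ closure S`, hence on a neighbourhood of any
point of `V ∩ interior (closure S)`. -/
theorem inter_interior_closure_eq_empty_of_eqOn_conj {S V : Set ℂ} {g : ℂ → ℂ} (hV : IsOpen V)
    (hg : DifferentiableOn ℂ g V) (hconj : EqOn conj g (S ∩ V)) :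
    V ∩ interior (closure S) = ∅ := by
  refine eq_empty_iff_forall_notMem.2 fun ζ ⟨hζV, hζ⟩ ↦ ?_
  have hnhds : V ∩ closure S ∈ 𝓝 ζ :=
    Filter.inter_mem (hV.mem_nhds hζV) (mem_interior_iff_mem_nhds.1 hζ)
  have hcongr : conj =ᶠ[𝓝 ζ] g :=
    Filter.mem_of_superset hnhds
      (hconj.inter_closure_of_isOpen hV continuous_conj.continuousOn hg.continuousOn)
  exact Complex.not_differentiableAt_conj ζ
    ((hg.differentiableAt (hV.mem_nhds hζV)).congr_of_eventuallyEq hcongr)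

/-- Lemma: the closure of a locally interpolable set has empty interior. -/
theorem stmt7 (S : Set ℂ) (h : LocallyInterpolable S) :
    interior (closure S) = ∅ := by
  refine eq_empty_iff_forall_notMem.2 fun ζ hζ ↦ ?_
  obtain ⟨V, hV, hζV, g, hg, hconj⟩ := h ζ (interior_subset hζ)
  exact (inter_interior_closure_eq_empty_of_eqOn_conj hV hg hconj).subset ⟨hζV, hζ⟩
end

section
/- For each integer r ≥ 0 let 𝒜_r = {(s + it)/2^r : s, t ∈ ℤ, 0 ≤ s ≤ 2^r, 0 ≤ t ≤ 2^r} ⊆ ℂ. Let (η_j)_{j≥1} be an injective sequence whose range equals ∪_{r≥0} 𝒜_r and such that for every r ≥ 0, the first (2^r+1)² terms η_1, …, η_{(2^r+1)²} all belong to 𝒜_r. Then there exists an integer p_η ≥ 2 such that for all p ≥ p_η and all q ∈ {1, …, p+1}, one has Π_{j=1, j≠q}^{p+1} |η_q − η_j| ≥ exp(−16p). -/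
open Complex Filter Finset Topology

/-- The `(1/2^r)`-net of the unit square `[0,1] + i[0,1]`. -/
def Anet (r : ℕ) : Set ℂ :=
  {z : ℂ | ∃ s t : ℕ, s ≤ 2 ^ r ∧ t ≤ 2 ^ r ∧
    z = ((s : ℂ) + (t : ℂ) * Complex.I) / (2 ^ r : ℂ)}

/-!
Multiplying by `2 ^ r`, where `p < (2 ^ r) ^ 2 ≤ 4p`, turns `η₀, …, η_p` into distinct Gaussian integers. A box of radius `m` around one of them contains
at most `4m² + 4m ≤ 8m²` others, so at most `K` of the numbers `8 |z_q - z_j|²` are `≤ K`, which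
forces their product to be at least `p!`. Then `p! ≥ (32p)^p e^{-32p}` gives
`∏ |η_q - η_j|² ≥ p! / (8 (2 ^ r) ^ 2)^p ≥ e^{-32p}`.
-/
open scoped Nat

theorem factorial_card_le_prod_of_card_filter_le {ι : Type*} (S : Finset ι) (f : ι → ℕ)
    (h : ∀ K, #{j ∈ S | f j ≤ K} ≤ K) : (#S)! ≤ ∏ j ∈ S, f j := by
  classical
  induction S using Finset.strongInduction with
  | _ S ih =>
  obtain rfl | hS := S.eq_empty_or_nonempty
  · simp
  -- otherwise all `#S` values of `f` on `S` would be `≤ #S - 1`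
  obtain ⟨j₀, hj₀, hbig⟩ : ∃ j₀ ∈ S, #S ≤ f j₀ := by
    by_contra! hsmall
    have := h (#S - 1)
    rw [filter_true_of_mem fun j hj => Nat.le_sub_one_of_lt (hsmall j hj)] at this
    have := hS.card_pos
    omega
  have hrest : (#(S.erase j₀))! ≤ ∏ j ∈ S.erase j₀, f j :=
    ih _ (erase_ssubset hj₀) fun K =>
      (card_le_card (filter_subset_filter _ (erase_subset _ _))).trans (h K)
  rw [← mul_prod_erase S f hj₀, ← Nat.mul_factorial_pred hS.card_pos.ne',
    ← card_erase_of_mem hj₀]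
  exact Nat.mul_le_mul hbig hrest

theorem card_filter_natAbs_le (P : Finset (ℤ × ℤ)) (h0 : (0 : ℤ × ℤ) ∉ P) (m : ℕ) :
    #{x ∈ P | x.1.natAbs ≤ m ∧ x.2.natAbs ≤ m} ≤ (2 * m + 1) ^ 2 - 1 := by
  have hbox : {x ∈ P | x.1.natAbs ≤ m ∧ x.2.natAbs ≤ m} ⊆
      (Icc (-(m : ℤ)) m ×ˢ Icc (-(m : ℤ)) m).erase 0 := by
    intro x hx
    obtain ⟨hxP, h1, h2⟩ := mem_filter.mp hx
    refine mem_erase.mpr ⟨ne_of_mem_of_not_mem hxP h0, mem_product.mpr ⟨?_, ?_⟩⟩ <;>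
      rw [mem_Icc] <;> omega
  refine (card_le_card hbox).trans_eq ?_
  rw [card_erase_of_mem (by simp), card_product, Int.card_Icc]
  congr 1
  rw [← sq]
  congr 1
  omega

theorem card_filter_eight_mul_sq_natAbs_le (P : Finset (ℤ × ℤ)) (h0 : (0 : ℤ × ℤ) ∉ P) (K : ℕ) :
    #{x ∈ P | 8 * (x.1.natAbs ^ 2 + x.2.natAbs ^ 2) ≤ K} ≤ K := by
  set m := Nat.sqrt (K / 8)
  have hsub : {x ∈ P | 8 * (x.1.natAbs ^ 2 + x.2.natAbs ^ 2) ≤ K} ⊆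
      {x ∈ P | x.1.natAbs ≤ m ∧ x.2.natAbs ≤ m} := by
    refine monotone_filter_right _ fun x _ hx => ⟨Nat.le_sqrt'.mpr ?_, Nat.le_sqrt'.mpr ?_⟩ <;>
      omega
  have hm : m ^ 2 ≤ K / 8 := Nat.sqrt_le' _
  have hm' : m ≤ m ^ 2 := Nat.le_self_pow two_ne_zero m
  calc _ ≤ #{x ∈ P | x.1.natAbs ≤ m ∧ x.2.natAbs ≤ m} := card_le_card hsub
    _ ≤ (2 * m + 1) ^ 2 - 1 := card_filter_natAbs_le P h0 m
    _ ≤ K := by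
      have : (2 * m + 1) ^ 2 = 4 * m ^ 2 + 4 * m + 1 := by ring
      omega

theorem factorial_card_le_eight_pow_mul_prod_norm_sq (P : Finset (ℤ × ℤ))
    (h0 : (0 : ℤ × ℤ) ∉ P) :
    ((#P)! : ℝ) ≤ 8 ^ #P * (∏ x ∈ P, ‖(x.1 : ℂ) + x.2 * I‖) ^ 2 := by
  have key :=
    factorial_card_le_prod_of_card_filter_le P _ (card_filter_eight_mul_sq_natAbs_le P h0)
  rw [prod_mul_distrib, prod_const] at key
  calc ((#P)! : ℝ) ≤ ((8 ^ #P * ∏ x ∈ P, (x.1.natAbs ^ 2 + x.2.natAbs ^ 2) : ℕ) : ℝ) := by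
        exact_mod_cast key
    _ = _ := by
      rw [← prod_pow]
      push_cast [Nat.cast_natAbs, sq_abs]
      congr 1
      refine prod_congr rfl fun x _ => ?_
      rw [← Complex.normSq_eq_norm_sq]
      exact_mod_cast (Complex.normSq_add_mul_I x.1 x.2).symm

theorem exp_neg_le_prod_norm_div (P : Finset (ℤ × ℤ)) (h0 : (0 : ℤ × ℤ) ∉ P) {c : ℝ}
    (hc : 0 < c) (hc4 : c ^ 2 ≤ 4 * #P) :
    Real.exp (-16 * #P) ≤ ∏ x ∈ P, ‖(x.1 : ℂ) + x.2 * I‖ / c := by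
  set n := #P
  set D := ∏ x ∈ P, ‖(x.1 : ℂ) + x.2 * I‖
  have hfac : (n ! : ℝ) ≤ 8 ^ n * D ^ 2 := factorial_card_le_eight_pow_mul_prod_norm_sq P h0
  have hstirling : ((32 : ℝ) * n) ^ n ≤ Real.exp (32 * n) * n ! := by
    have := Real.pow_div_factorial_le_exp (32 * n) (by positivity) n
    rwa [div_le_iff₀ (by positivity)] at this
  rw [prod_div_distrib, prod_const]
  refine le_of_pow_le_pow_left₀ two_ne_zero (by positivity) ?_
  rw [← Real.exp_nat_mul, div_pow, le_div_iff₀ (by positivity), ← pow_mul, mul_comm n, pow_mul]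
  calc Real.exp (2 * (-16 * n)) * (c ^ 2) ^ n
      ≤ Real.exp (-32 * n) * (4 * n) ^ n := by
        rw [show (2 : ℝ) * (-16 * n) = -32 * n by ring]
        gcongr
    _ = Real.exp (-32 * n) * ((32 : ℝ) * n) ^ n / 8 ^ n := by
        rw [mul_div_assoc, show (32 : ℝ) * n = 8 * (4 * n) by ring, mul_pow (8 : ℝ),
          mul_div_cancel_left₀ _ (by positivity)]
    _ ≤ Real.exp (-32 * n) * (Real.exp (32 * n) * n !) / 8 ^ n := by gcongr
    _ = n ! / 8 ^ n := by
        rw [← mul_assoc, ← Real.exp_add]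
        simp
    _ ≤ D ^ 2 := by rwa [div_le_iff₀ (by positivity), mul_comm]

theorem exists_lt_two_pow_sq_le_four_mul {p : ℕ} (hp : p ≠ 0) :
    ∃ r : ℕ, p < (2 ^ r) ^ 2 ∧ (2 ^ r) ^ 2 ≤ 4 * p := by
  set m := Nat.sqrt p
  have hm : m ≠ 0 := by simpa [m, Nat.sqrt_eq_zero] using hp
  refine ⟨Nat.log 2 m + 1, ?_, ?_⟩
  · calc p < (m + 1) ^ 2 := Nat.lt_succ_sqrt' p
      _ ≤ (2 ^ (Nat.log 2 m + 1)) ^ 2 := by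
        gcongr
        exact Nat.lt_pow_succ_log_self one_lt_two m
  · calc (2 ^ (Nat.log 2 m + 1)) ^ 2 = 4 * (2 ^ Nat.log 2 m) ^ 2 := by ring
      _ ≤ 4 * m ^ 2 := by gcongr; exact Nat.pow_log_le_self 2 hm
      _ ≤ 4 * p := by gcongr; exact Nat.sqrt_le' p

theorem exp_neg_le_prod_norm_sub_of_mem_Anet {ι : Type*} {r : ℕ} {z : ℂ} {w : ι → ℂ}
    {S : Finset ι} (hz : z ∈ Anet r) (hw : ∀ j ∈ S, w j ∈ Anet r) (hinj : Set.InjOn w S)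
    (hne : ∀ j ∈ S, w j ≠ z) (hr : (2 ^ r) ^ 2 ≤ 4 * #S) :
    Real.exp (-16 * #S) ≤ ∏ j ∈ S, ‖z - w j‖ := by
  obtain ⟨s₀, t₀, -, -, rfl⟩ := hz
  choose! s t _ _ hw using hw
  set κ : ι → ℤ × ℤ := fun j => ((s₀ : ℤ) - s j, (t₀ : ℤ) - t j)
  have hκ : Set.InjOn κ S := fun j hj k hk hjk => by
    simp only [κ, Prod.mk.injEq, sub_right_inj, Nat.cast_inj] at hjk
    exact hinj hj hk (by rw [hw j hj, hw k hk, hjk.1, hjk.2])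
  have hκ0 : (0 : ℤ × ℤ) ∉ S.image κ := by
    simp only [mem_image, not_exists, not_and]
    intro j hj hj0
    simp only [κ, Prod.mk_eq_zero, sub_eq_zero, Nat.cast_inj] at hj0
    exact hne j hj (by rw [hw j hj, hj0.1, hj0.2])
  have hdist : ∀ j ∈ S, ‖((κ j).1 : ℂ) + (κ j).2 * I‖ / 2 ^ r =
      ‖((s₀ : ℂ) + t₀ * I) / 2 ^ r - w j‖ := by
    intro j hj
    rw [hw j hj, div_sub_div_same, norm_div, norm_pow, Complex.norm_two]
    congr 2
    push_cast [κ]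
    ring
  rw [← prod_congr rfl hdist, ← prod_image (f := fun x => ‖(x.1 : ℂ) + x.2 * I‖ / 2 ^ r) hκ,
    ← card_image_of_injOn hκ]
  refine exp_neg_le_prod_norm_div _ hκ0 (by positivity) ?_
  rw [card_image_of_injOn hκ]
  exact_mod_cast hr

theorem stmt11_general (η : ℕ → ℂ) (hinj : Function.Injective η)
    (hfirst : ∀ r : ℕ, ∀ j < (2 ^ r + 1) ^ 2, η j ∈ Anet r) :
    ∃ pη : ℕ, 2 ≤ pη ∧ ∀ p ≥ pη, ∀ q ≤ p,
      Real.exp (-16 * (p : ℝ)) ≤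
        ∏ j ∈ (Finset.range (p + 1)).erase q, ‖η q - η j‖ := by
  refine ⟨2, le_rfl, fun p hp q hq => ?_⟩
  obtain ⟨r, hpr, hrp⟩ := exists_lt_two_pow_sq_le_four_mul (p := p) (by omega)
  have hnet : ∀ j ≤ p, η j ∈ Anet r := fun j hj => hfirst r j <|
    (hj.trans_lt hpr).trans_le (Nat.pow_le_pow_left (Nat.le_succ _) 2)
  have hcard : #((range (p + 1)).erase q) = p := by
    rw [card_erase_of_mem (mem_range.mpr (by omega)), card_range, Nat.add_sub_cancel]
  have key := exp_neg_le_prod_norm_sub_of_mem_Anet (hnet q hq)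
    (fun j hj => hnet j (Nat.lt_succ_iff.mp (mem_range.mp (mem_of_mem_erase hj))))
    hinj.injOn (fun j hj => hinj.ne (ne_of_mem_erase hj)) (by rw [hcard]; exact hrp)
  rwa [hcard] at key

/-- Lemma: lower bound for the products of mutual distances. -/
theorem stmt11 (η : ℕ → ℂ) (hinj : Function.Injective η)
    (hrange : Set.range η = ⋃ r, Anet r)
    (hfirst : ∀ r : ℕ, ∀ j < (2 ^ r + 1) ^ 2, η j ∈ Anet r) :
    ∃ pη : ℕ, 2 ≤ pη ∧ ∀ p ≥ pη, ∀ q ≤ p,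
      Real.exp (-16 * (p : ℝ)) ≤
        ∏ j ∈ (Finset.range (p + 1)).erase q, ‖η q - η j‖ :=
  stmt11_general η hinj hfirst
end

section
/- For each integer r ≥ 0 let 𝒜_r = {(s + it)/2^r : s, t ∈ ℤ, 0 ≤ s ≤ 2^r, 0 ≤ t ≤ 2^r} ⊆ ℂ. Let (η_j)_{j≥1} be an injective sequence whose range equals ∪_{r≥0} 𝒜_r and such that for every r ≥ 0, the first (2^r+1)² terms η_1, …, η_{(2^r+1)²} all belong to 𝒜_r. Then there exists a constant R_η > 0 (depending only on η) such that for every function h : ℂ → ℂ with ‖h‖_∞ := sup_{j≥1} |h(η_j)| < ∞ and every integer p ≥ 0, one has |Δ_{p,(η_p,…,η_1)}(h)(η_{p+1})| ≤ ‖h‖_∞ · R_η^p. -/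
open Complex Filter Finset Topology

/-!
Divided differences have the Lagrange form `Δ = ∑ⱼ h(ηⱼ) / ∏_{k ≠ j} (ηⱼ - ηₖ)`, so it suffices
to bound each product `∏_{k ≠ j} |ηⱼ - ηₖ|` from below by `16⁻ᵖ`. The points `η₀, …, ηₚ` are
distinct points of the lattice `2⁻ʳ(ℤ + iℤ)` with `4ʳ ≍ p`. At most `8k²` of them lie within
distance `k 2⁻ʳ` of `ηⱼ`, so the `i`-th nearest one is at distance at least `2⁻ʳ √(i / 8)`; hence
the squared product is at least `p! / (8 · 4ʳ)ᵖ`, which Stirling's bound `p! ≥ (p / e)ᵖ` turns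
into `256⁻ᵖ`.
-/

noncomputable def lagrangeSum (h : ℂ → ℂ) (s : Finset ℂ) : ℂ :=
  ∑ x ∈ s, h x * (∏ y ∈ s.erase x, (x - y))⁻¹

lemma lagrangeSum_insert (h : ℂ → ℂ) {s : Finset ℂ} {w : ℂ} (hw : w ∉ s) :
    lagrangeSum h (insert w s) =
      lagrangeSum (fun x => h x / (x - w)) s + h w * (∏ y ∈ s, (w - y))⁻¹ := by
  unfold lagrangeSum
  rw [sum_insert hw, erase_insert hw, add_comm]
  congr 1
  refine sum_congr rfl fun x hx => ?_
  rw [erase_insert_of_ne (ne_of_mem_of_not_mem hx hw).symm,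
    prod_insert fun hw' => hw (mem_of_mem_erase hw'), mul_inv]
  dsimp only
  ring

lemma lagrangeSum_div_sub_sub_div_sub (h : ℂ → ℂ) {s : Finset ℂ} {a w : ℂ} (ha : a ∉ s)
    (hw : w ∉ s) :
    lagrangeSum (fun x => h x / (x - w)) s - lagrangeSum (fun x => h x / (x - a)) s =
      (w - a) * lagrangeSum (fun x => h x / (x - w) / (x - a)) s := by
  unfold lagrangeSum
  rw [← sum_sub_distrib, mul_sum]
  refine sum_congr rfl fun x hx => ?_
  have hxw : x - w ≠ 0 := sub_ne_zero.2 (ne_of_mem_of_not_mem hx hw)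
  have hxa : x - a ≠ 0 := sub_ne_zero.2 (ne_of_mem_of_not_mem hx ha)
  field_simp
  ring

/-- The recurrence defining `divDiff`, for Lagrange sums. -/
lemma lagrangeSum_insert_insert (h : ℂ → ℂ) {s : Finset ℂ} {a w : ℂ} (ha : a ∉ s) (hw : w ∉ s)
    (hwa : w ≠ a) :
    lagrangeSum h (insert w (insert a s)) =
      (lagrangeSum h (insert w s) - lagrangeSum h (insert a s)) / (w - a) := by
  have hwa' : w - a ≠ 0 := sub_ne_zero.2 hwa
  rw [lagrangeSum_insert h (by simp [hwa, hw]), lagrangeSum_insert _ ha, lagrangeSum_insert h hw,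
    lagrangeSum_insert h ha, prod_insert ha, eq_div_iff hwa']
  have hsplit := lagrangeSum_div_sub_sub_div_sub h ha hw
  generalize lagrangeSum (fun x => h x / (x - w)) s = Lw at hsplit ⊢
  generalize lagrangeSum (fun x => h x / (x - a)) s = La at hsplit ⊢
  generalize lagrangeSum (fun x => h x / (x - w) / (x - a)) s = Lwa at hsplit ⊢
  have ha' : h a / (a - w) * (w - a) = -h a := by
    rw [← neg_sub w a, div_neg, neg_mul, div_mul_cancel₀ _ hwa']
  have hw' : ((w - a) * ∏ y ∈ s, (w - y))⁻¹ * (w - a) = (∏ y ∈ s, (w - y))⁻¹ := by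
    rw [mul_inv, mul_comm (w - a)⁻¹, mul_assoc, inv_mul_cancel₀ hwa', mul_one]
  linear_combination -hsplit + (∏ y ∈ s, (a - y))⁻¹ * ha' + h w * hw'

lemma divDiff_eq_lagrangeSum (h : ℂ → ℂ) :
    ∀ (l : List ℂ) (w : ℂ), l.Nodup → w ∉ l → divDiff l h w = lagrangeSum h (insert w l.toFinset)
  | [], w, _, _ => by simp [divDiff, lagrangeSum]
  | a :: l, w, hl, hw => by
    rw [List.nodup_cons] at hl
    rw [List.mem_cons, not_or] at hw
    rw [divDiff, divDiff_eq_lagrangeSum h l w hl.2 hw.2, divDiff_eq_lagrangeSum h l a hl.2 hl.1,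
      List.toFinset_cons, lagrangeSum_insert_insert h (by simpa using hl.1) (by simpa using hw.2)
        hw.1]

lemma deltaP_eq_lagrangeSum {η : ℕ → ℂ} (hinj : Function.Injective η) (h : ℂ → ℂ) (p : ℕ) :
    deltaP η h p = lagrangeSum h ((range (p + 1)).image η) := by
  rw [deltaP, divDiff_eq_lagrangeSum h _ _ (List.nodup_reverse.2 List.nodup_range |>.map hinj)
    (by simp [hinj.eq_iff])]
  rw [range_add_one, image_insert]
  congr 1
  ext z
  simp [eq_comm]

lemma norm_lagrangeSum_le {h : ℂ → ℂ} {s : Finset ℂ} {M c : ℝ} (hc : 0 < c)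
    (hM : ∀ x ∈ s, ‖h x‖ ≤ M) (hsep : ∀ x ∈ s, c ≤ ∏ y ∈ s.erase x, ‖x - y‖) :
    ‖lagrangeSum h s‖ ≤ #s * (M / c) :=
  calc ‖lagrangeSum h s‖ ≤ ∑ x ∈ s, ‖h x * (∏ y ∈ s.erase x, (x - y))⁻¹‖ := norm_sum_le _ _
    _ ≤ ∑ _x ∈ s, M / c := sum_le_sum fun x hx => by
      rw [norm_mul, norm_inv, norm_prod, ← div_eq_mul_inv]
      exact div_le_div₀ ((norm_nonneg _).trans (hM x hx)) (hM x hx) hc (hsep x hx)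
    _ = #s * (M / c) := by rw [sum_const, nsmul_eq_mul]

/-- The `i`-th smallest value `f j` of `f` on `T` has `i ≤ g (f j)`. -/
theorem Finset.card_factorial_le_prod {ι α : Type*} [DecidableEq ι] [LinearOrder α]
    (T : Finset ι) (f : ι → α) (g : α → ℝ)
    (hg : ∀ j ∈ T, (#{i ∈ T | f i ≤ f j} : ℝ) ≤ g (f j)) :
    ((#T).factorial : ℝ) ≤ ∏ j ∈ T, g (f j) := by
  induction T using Finset.induction_on_max_value f with
  | empty => simp
  | insert a s ha hmax ih =>
    have hs : ∀ j ∈ s, (#{i ∈ s | f i ≤ f j} : ℝ) ≤ g (f j) := fun j hj =>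
      le_trans (Nat.cast_le.2 (card_le_card (filter_subset_filter _ (subset_insert a s))))
        (hg j (mem_insert_of_mem hj))
    have hga := hg a (mem_insert_self a s)
    rw [filter_true_of_mem fun i hi => (mem_insert.1 hi).elim (fun h => h ▸ le_rfl) (hmax i),
      card_insert_of_notMem ha] at hga
    rw [card_insert_of_notMem ha, prod_insert ha, Nat.factorial_succ, Nat.cast_mul]
    exact mul_le_mul hga (ih hs) (by positivity) ((Nat.cast_nonneg _).trans hga)

def squareLattice (δ : ℝ) : Set ℂ :=
  {z | ∃ m n : ℤ, z = δ * (m + n * I)}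

lemma mem_Icc_of_abs_mul_le {δ a : ℝ} (hδ : 0 < δ) {d : ℤ} (hd : |(d : ℝ)| * δ ≤ a) :
    d ∈ Icc (-(⌊a / δ⌋₊ : ℤ)) ⌊a / δ⌋₊ := by
  have : d.natAbs ≤ ⌊a / δ⌋₊ :=
    Nat.le_floor (by rwa [Nat.cast_natAbs, Int.cast_abs, le_div_iff₀ hδ])
  rw [mem_Icc]
  omega

lemma card_filter_norm_sub_le {δ : ℝ} (hδ : 0 < δ) {S : Finset ℂ} (hS : ↑S ⊆ squareLattice δ)
    {x : ℂ} (hx : x ∈ squareLattice δ) {a : ℝ} (ha : 0 ≤ a) :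
    (#{y ∈ S.erase x | ‖x - y‖ ≤ a} : ℝ) ≤ 8 * (a / δ) ^ 2 := by
  obtain ⟨m, n, rfl⟩ := hx
  set k := ⌊a / δ⌋₊
  let box : Finset (ℤ × ℤ) := (Icc (-(k : ℤ)) k ×ˢ Icc (-(k : ℤ)) k).erase 0
  have hsub : {y ∈ S.erase (δ * (m + n * I)) | ‖δ * (m + n * I) - y‖ ≤ a} ⊆
      box.image fun v => δ * (m + n * I) - δ * (v.1 + v.2 * I) := by
    intro y hy
    simp only [mem_filter, mem_erase] at hy
    obtain ⟨⟨hyx, hyS⟩, hya⟩ := hy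
    obtain ⟨m', n', rfl⟩ := hS hyS
    have hre : |((m - m' : ℤ) : ℝ)| * δ ≤ a := by
      refine le_trans (le_of_eq ?_) ((abs_re_le_norm _).trans hya)
      simp [← mul_sub, abs_mul, abs_of_pos hδ, mul_comm]
    have him : |((n - n' : ℤ) : ℝ)| * δ ≤ a := by
      refine le_trans (le_of_eq ?_) ((abs_im_le_norm _).trans hya)
      simp [← mul_sub, abs_mul, abs_of_pos hδ, mul_comm]
    refine mem_image.2 ⟨(m - m', n - n'), mem_erase.2 ⟨fun h0 => hyx ?_,
      mem_product.2 ⟨mem_Icc_of_abs_mul_le hδ hre, mem_Icc_of_abs_mul_le hδ him⟩⟩, ?_⟩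
    · simp only [Prod.mk_eq_zero, sub_eq_zero] at h0
      rw [h0.1, h0.2]
    · push_cast
      ring
  have hbox : #box = (2 * k + 1) ^ 2 - 1 := by
    rw [card_erase_of_mem (by simp), card_product, Int.card_Icc, sq]
    congr 2 <;> omega
  have hk : (k : ℝ) ≤ a / δ := Nat.floor_le (div_nonneg ha hδ.le)
  calc (#{y ∈ S.erase (δ * (m + n * I)) | ‖δ * (m + n * I) - y‖ ≤ a} : ℝ)
      ≤ #box := Nat.cast_le.2 ((card_le_card hsub).trans card_image_le)
    _ ≤ 8 * k ^ 2 := by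
      rw [hbox]
      exact_mod_cast (show (2 * k + 1) ^ 2 - 1 ≤ 8 * k ^ 2 from
        Nat.sub_le_iff_le_add.2 (by nlinarith [Nat.le_self_pow two_ne_zero k]))
    _ ≤ 8 * (a / δ) ^ 2 := by gcongr

lemma factorial_le_prod_norm_sub {δ : ℝ} (hδ : 0 < δ) {S : Finset ℂ}
    (hS : ↑S ⊆ squareLattice δ) {x : ℂ} (hx : x ∈ S) :
    ((#(S.erase x)).factorial : ℝ) ≤ ∏ y ∈ S.erase x, 8 * (‖x - y‖ / δ) ^ 2 :=
  (S.erase x).card_factorial_le_prod (fun y => ‖x - y‖) (fun a => 8 * (a / δ) ^ 2)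
    fun _ _ => card_filter_norm_sub_le hδ hS (hS hx) (norm_nonneg _)

lemma Anet_subset_squareLattice (r : ℕ) : Anet r ⊆ squareLattice (2 ^ r)⁻¹ := by
  rintro _ ⟨s, t, -, -, rfl⟩
  exact ⟨s, t, by push_cast; ring⟩

lemma exists_image_range_subset_Anet {η : ℕ → ℂ}
    (hfirst : ∀ r : ℕ, ∀ j < (2 ^ r + 1) ^ 2, η j ∈ Anet r) (p : ℕ) :
    ∃ r, ↑((range (p + 1)).image η) ⊆ Anet r ∧ 4 ^ r < 4 * (p + 1) := by
  -- `4 ^ r ≤ 4p + 3 < 4 ^ (r + 1)`, i.e. `p + 1 ≤ 4 ^ r < 4 (p + 1)`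
  set r := Nat.log 4 (4 * p + 3)
  have hle : 4 ^ r ≤ 4 * p + 3 := Nat.pow_log_le_self 4 (by omega)
  have hlt : 4 * p + 3 < 4 * 4 ^ r := pow_succ' 4 r ▸ Nat.lt_pow_succ_log_self (by norm_num) _
  have hsq : 4 ^ r ≤ (2 ^ r + 1) ^ 2 := by
    rw [show (4 : ℕ) ^ r = (2 ^ r) ^ 2 by rw [← pow_mul, mul_comm, pow_mul]; norm_num]
    exact Nat.pow_le_pow_left (Nat.le_succ _) 2
  refine ⟨r, ?_, by omega⟩
  simp only [coe_image, coe_range, Set.image_subset_iff]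
  exact fun j hj => hfirst r j (by simp at hj; omega)

lemma pow_le_four_pow_mul_factorial (n : ℕ) : (n : ℝ) ^ n ≤ 4 ^ n * n.factorial := by
  have := Real.pow_div_factorial_le_exp (n : ℝ) (Nat.cast_nonneg n) n
  rw [div_le_iff₀ (by positivity), ← Real.exp_one_pow] at this
  exact this.trans (by gcongr; exact Real.exp_one_lt_d9.le.trans (by norm_num))

lemma inv_sixteen_pow_le_prod_norm_sub {r : ℕ} {S : Finset ℂ} (hS : ↑S ⊆ Anet r)
    (hr : 4 ^ r < 4 * #S) {x : ℂ} (hx : x ∈ S) :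
    (16⁻¹ : ℝ) ^ #(S.erase x) ≤ ∏ y ∈ S.erase x, ‖x - y‖ := by
  have hcard := card_erase_add_one hx
  set n := #(S.erase x)
  set P := ∏ y ∈ S.erase x, ‖x - y‖
  rcases n.eq_zero_or_pos with hn | hn
  · simp [P, hn, card_eq_zero.1 hn]
  have hfact := factorial_le_prod_norm_sub (by positivity)
    (hS.trans (Anet_subset_squareLattice r)) hx
  rw [prod_congr rfl fun y _ => show 8 * (‖x - y‖ / (2 ^ r)⁻¹) ^ 2 = 8 * 4 ^ r * ‖x - y‖ ^ 2 by
    rw [div_inv_eq_mul, mul_pow, ← pow_mul, mul_comm r 2, pow_mul]; ring,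
    prod_mul_distrib, prod_const, prod_pow] at hfact
  have hr' : (4 : ℝ) ^ r ≤ 8 * n := by exact_mod_cast (show 4 ^ r ≤ 8 * n by omega)
  have hsq : (16⁻¹ ^ n) ^ 2 ≤ P ^ 2 := by
    refine le_of_mul_le_mul_left ?_ (by positivity : (0 : ℝ) < (32 * 4 ^ r) ^ n)
    calc (32 * 4 ^ r) ^ n * (16⁻¹ ^ n) ^ 2 = (4 ^ r / 8 : ℝ) ^ n := by
          rw [← pow_mul, mul_comm n 2, pow_mul, ← mul_pow]; ring_nf
      _ ≤ (n : ℝ) ^ n := by gcongr; linarith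
      _ ≤ 4 ^ n * ((8 * 4 ^ r) ^ n * P ^ 2) := (pow_le_four_pow_mul_factorial n).trans (by gcongr)
      _ = (32 * 4 ^ r) ^ n * P ^ 2 := by
        rw [← mul_assoc, ← mul_pow]; ring_nf
  exact (pow_le_pow_iff_left₀ (by positivity) (prod_nonneg fun _ _ => norm_nonneg _)
    two_ne_zero).1 hsq

theorem stmt12_general (η : ℕ → ℂ) (hinj : Function.Injective η)
    (hfirst : ∀ r : ℕ, ∀ j < (2 ^ r + 1) ^ 2, η j ∈ Anet r) :
    ∃ R : ℝ, 0 < R ∧ ∀ (h : ℂ → ℂ) (M : ℝ), (∀ j, ‖h (η j)‖ ≤ M) →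
      ∀ p : ℕ, ‖deltaP η h p‖ ≤ M * R ^ p := by
  refine ⟨32, by norm_num, fun h M hM p => ?_⟩
  set S := (range (p + 1)).image η
  have hcard : #S = p + 1 := by rw [card_image_of_injective _ hinj, card_range]
  obtain ⟨r, hSr, hr⟩ := exists_image_range_subset_Anet hfirst p
  have hsep : ∀ x ∈ S, (16⁻¹ : ℝ) ^ p ≤ ∏ y ∈ S.erase x, ‖x - y‖ := fun x hx => by
    have := inv_sixteen_pow_le_prod_norm_sub hSr (by rwa [hcard]) hx
    rwa [card_erase_of_mem hx, hcard, Nat.add_sub_cancel] at this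
  have hMS : ∀ x ∈ S, ‖h x‖ ≤ M := by
    simp only [S, mem_image]
    rintro _ ⟨j, -, rfl⟩
    exact hM j
  have hM0 : 0 ≤ M := (norm_nonneg _).trans (hM 0)
  rw [deltaP_eq_lagrangeSum hinj]
  calc ‖lagrangeSum h S‖ ≤ #S * (M / 16⁻¹ ^ p) := norm_lagrangeSum_le (by positivity) hMS hsep
    _ = (p + 1 : ℕ) * 16 ^ p * M := by rw [hcard, inv_pow, div_inv_eq_mul]; ring
    _ ≤ 2 ^ p * 16 ^ p * M := by gcongr; exact_mod_cast Nat.lt_two_pow_self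
    _ = M * 32 ^ p := by rw [← mul_pow]; norm_num; ring

/-- Lemma: bound on divided differences of any bounded function
for the square sequence. -/
theorem stmt12 (η : ℕ → ℂ) (hinj : Function.Injective η)
    (hrange : Set.range η = ⋃ r, Anet r)
    (hfirst : ∀ r : ℕ, ∀ j < (2 ^ r + 1) ^ 2, η j ∈ Anet r) :
    ∃ R : ℝ, 0 < R ∧ ∀ (h : ℂ → ℂ) (M : ℝ), (∀ j, ‖h (η j)‖ ≤ M) →
      ∀ p : ℕ, ‖deltaP η h p‖ ≤ M * R ^ p :=
  stmt12_general η hinj hfirst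
end

section
/- Let (θ_j)_{j≥1} be a bounded sequence of pairwise distinct complex numbers and (κ_j)_{j≥1} a sequence of pairwise distinct complex numbers satisfying condition (1.2), with dist({θ_j : j≥1}, {κ_j : j≥1}) > 0. Define η by η_{2k} := θ_k and η_{2k−1} := κ_k for k ≥ 1. Then there exists a bijection σ₁ of the positive integers such that the sequence (η_{σ₁(j)})_{j≥1} satisfies condition (1.2). -/
open Complex Filter Finset Topology

/-!
Divided differences at distinct points are symmetric in the points (Lagrange form
`∑ₓ h x / ∏_{y ≠ x} (x - y)`), so a point set `S ∪ {u, v}` can be split by removing either `u`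
or `v`: `Δ(S ∪ {u, v}) = (Δ(S ∪ {u}) - Δ(S ∪ {v})) / (u - v)`. When every `θ` is at distance
`≥ d` from every `κ`, this recursion with `u` a `κ` and `v` a `θ` bounds the divided difference
over `{κⱼ}_{j<m} ∪ {θᵢ}_{i<k}` by `c A^{m+k} C_k` for `A ≥ 2 / d`, where `C_k` depends only on
`θ₀, …, θ_{k-1}`: it bounds the pure `θ` divided differences crudely, through the Lagrange form
and `‖h‖ ≤ 1`. Placing each `θ_k` so late in the merged sequence that `C_{k+1} ≤ A^{position}`
makes the bound exponential in the number of points, which is (1.2).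
-/

open Function

section SymmDivDiff

variable {K : Type*} [Field K] [DecidableEq K]

noncomputable def symmDivDiffCoeff (s : Finset K) (x : K) : K :=
  (∏ y ∈ s.erase x, (x - y))⁻¹

noncomputable def symmDivDiff (s : Finset K) (h : K → K) : K :=
  ∑ x ∈ s, h x * symmDivDiffCoeff s x

theorem symmDivDiffCoeff_insert {s : Finset K} {u x : K} (hx : x ∈ s) (hu : u ∉ s) :
    symmDivDiffCoeff (insert u s) x = (x - u)⁻¹ * symmDivDiffCoeff s x := by
  have hux : u ≠ x := (ne_of_mem_of_not_mem hx hu).symm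
  rw [symmDivDiffCoeff, symmDivDiffCoeff, erase_insert_of_ne hux,
    prod_insert fun h => hu (mem_of_mem_erase h), mul_inv]

theorem symmDivDiff_insert_insert {s : Finset K} {u v : K} (h : K → K) (hu : u ∉ s) (hv : v ∉ s)
    (huv : u ≠ v) :
    symmDivDiff (insert u (insert v s)) h =
      (symmDivDiff (insert u s) h - symmDivDiff (insert v s) h) / (u - v) := by
  have hu' : u ∉ insert v s := by simp [huv, hu]
  have hv' : v ∉ insert u s := by simp [huv.symm, hv]
  have hcu : symmDivDiffCoeff (insert u (insert v s)) u =
      (u - v)⁻¹ * symmDivDiffCoeff (insert u s) u := by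
    rw [insert_comm]
    exact symmDivDiffCoeff_insert (mem_insert_self u s) hv'
  have hcv : symmDivDiffCoeff (insert u (insert v s)) v =
      (v - u)⁻¹ * symmDivDiffCoeff (insert v s) v :=
    symmDivDiffCoeff_insert (mem_insert_self v s) hu'
  have hcx : ∀ x ∈ s, symmDivDiffCoeff (insert u (insert v s)) x * (u - v) =
      symmDivDiffCoeff (insert u s) x - symmDivDiffCoeff (insert v s) x := by
    intro x hx
    have hxu : x - u ≠ 0 := sub_ne_zero.2 (ne_of_mem_of_not_mem hx hu)
    have hxv : x - v ≠ 0 := sub_ne_zero.2 (ne_of_mem_of_not_mem hx hv)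
    rw [symmDivDiffCoeff_insert (mem_insert_of_mem hx) hu', symmDivDiffCoeff_insert hx hv,
      symmDivDiffCoeff_insert hx hu]
    field_simp
    ring
  have huv' : u - v ≠ 0 := sub_ne_zero.2 huv
  rw [eq_div_iff huv', symmDivDiff, symmDivDiff, symmDivDiff, sum_insert hu', sum_insert hv,
    sum_insert hu, sum_insert hv, add_mul, add_mul, sum_mul]
  simp only [mul_assoc]
  rw [sum_congr rfl fun x hx => congrArg (h x * ·) (hcx x hx)]
  simp only [mul_sub, sum_sub_distrib, hcu, hcv]
  field_simp
  ring

end SymmDivDiff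

theorem divDiff_eq_symmDivDiff (h : ℂ → ℂ) :
    ∀ (l : List ℂ) (w : ℂ), l.Nodup → w ∉ l → divDiff l h w = symmDivDiff (insert w l.toFinset) h
  | [], w, _, _ => by simp [divDiff, symmDivDiff, symmDivDiffCoeff]
  | a :: l, w, hl, hw => by
    rw [List.nodup_cons] at hl
    rw [List.mem_cons, not_or] at hw
    rw [divDiff, divDiff_eq_symmDivDiff h l w hl.2 hw.2, divDiff_eq_symmDivDiff h l a hl.2 hl.1,
      ← symmDivDiff_insert_insert h (by simpa using hw.2) (by simpa using hl.1) hw.1,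
      List.toFinset_cons]

theorem deltaP_eq_symmDivDiff {η : ℕ → ℂ} (hη : Injective η) (h : ℂ → ℂ) (p : ℕ) :
    deltaP η h p = symmDivDiff ((range (p + 1)).image η) h := by
  have hnodup : ((List.range p).reverse.map η).Nodup :=
    (List.nodup_reverse.2 List.nodup_range).map hη
  have hp : η p ∉ (List.range p).reverse.map η := by
    simp [hη.eq_iff]
  rw [deltaP, divDiff_eq_symmDivDiff h _ _ hnodup hp, range_add_one, image_insert]
  congr 2
  ext
  simp

theorem norm_conj_div_one_add_normSq_le_one (ζ : ℂ) :
    ‖(starRingEnd ℂ) ζ / (1 + (Complex.normSq ζ : ℂ))‖ ≤ 1 := by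
  have h : (1 + (Complex.normSq ζ : ℂ)) = ((1 + ‖ζ‖ ^ 2 : ℝ) : ℂ) := by
    rw [Complex.normSq_eq_norm_sq]; push_cast; ring
  rw [h, norm_div, Complex.norm_real, Real.norm_of_nonneg (by positivity), RCLike.norm_conj,
    div_le_one (by positivity)]
  nlinarith [sq_nonneg (‖ζ‖ - 1)]

section Norm

variable {K : Type*} [NormedField K] [DecidableEq K]

noncomputable def symmDivDiffWeight (s : Finset K) : ℝ :=
  ∑ x ∈ s, ‖symmDivDiffCoeff s x‖

theorem symmDivDiffWeight_nonneg (s : Finset K) : 0 ≤ symmDivDiffWeight s :=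
  sum_nonneg fun _ _ => norm_nonneg _

theorem norm_symmDivDiff_le_weight {s : Finset K} {h : K → K} (hh : ∀ x ∈ s, ‖h x‖ ≤ 1) :
    ‖symmDivDiff s h‖ ≤ symmDivDiffWeight s := by
  refine (norm_sum_le _ _).trans (sum_le_sum fun x hx => ?_)
  rw [norm_mul]
  exact mul_le_of_le_one_left (norm_nonneg _) (hh x hx)

theorem norm_symmDivDiff_insert_insert_le {s : Finset K} {u v : K} (h : K → K) {d : ℝ}
    (hu : u ∉ s) (hv : v ∉ s) (hd : 0 < d) (huv : d ≤ ‖u - v‖) :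
    ‖symmDivDiff (insert u (insert v s)) h‖ ≤
      (‖symmDivDiff (insert u s) h‖ + ‖symmDivDiff (insert v s) h‖) / d := by
  have huv' : u ≠ v := sub_ne_zero.1 (norm_pos_iff.1 (hd.trans_le huv))
  rw [symmDivDiff_insert_insert h hu hv huv', norm_div]
  exact div_le_div₀ (by positivity) (norm_sub_le _ _) hd huv

/-- The constant `C_k` of the sketch above. -/
noncomputable def prefixWeight (θ : ℕ → K) (k : ℕ) : ℝ :=
  1 + ∑ j ∈ range (k + 1), symmDivDiffWeight ((range j).image θ)

theorem prefixWeight_zero (θ : ℕ → K) : prefixWeight θ 0 = 1 := by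
  simp [prefixWeight, symmDivDiffWeight]

theorem one_le_prefixWeight (θ : ℕ → K) (k : ℕ) : 1 ≤ prefixWeight θ k :=
  le_add_of_nonneg_right (sum_nonneg fun _ _ => symmDivDiffWeight_nonneg _)

theorem prefixWeight_le_succ (θ : ℕ → K) (k : ℕ) : prefixWeight θ k ≤ prefixWeight θ (k + 1) := by
  rw [prefixWeight, prefixWeight, sum_range_succ _ (k + 1)]
  linarith [symmDivDiffWeight_nonneg ((range (k + 1)).image θ)]

theorem symmDivDiffWeight_le_prefixWeight (θ : ℕ → K) (k : ℕ) :
    symmDivDiffWeight ((range k).image θ) ≤ prefixWeight θ k := by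
  have := single_le_sum (f := fun j => symmDivDiffWeight ((range j).image θ))
    (fun _ _ => symmDivDiffWeight_nonneg _) (self_mem_range_succ k)
  rw [prefixWeight]
  linarith

theorem norm_symmDivDiff_image_le_prefixWeight {θ : ℕ → K} {h : K → K}
    (hh : ∀ i, ‖h (θ i)‖ ≤ 1) (k : ℕ) :
    ‖symmDivDiff ((range k).image θ) h‖ ≤ prefixWeight θ k :=
  (norm_symmDivDiff_le_weight (by simpa using fun i _ => hh i)).trans
    (symmDivDiffWeight_le_prefixWeight θ k)

theorem norm_symmDivDiff_union_succ_succ_le {θ κ : ℕ → K} {h : K → K} {d B : ℝ}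
    (hθ : Injective θ) (hκ : Injective κ) (hd : 0 < d) (hsep : ∀ i j, d ≤ dist (θ i) (κ j))
    {m k : ℕ} (hκB : ‖symmDivDiff ((range (m + 1)).image κ ∪ (range k).image θ) h‖ ≤ B)
    (hθB : ‖symmDivDiff ((range m).image κ ∪ (range (k + 1)).image θ) h‖ ≤ B) :
    ‖symmDivDiff ((range (m + 1)).image κ ∪ (range (k + 1)).image θ) h‖ ≤ 2 * B / d := by
  have hne : ∀ i j, θ i ≠ κ j := fun i j => dist_pos.1 (hd.trans_le (hsep i j))
  set s := (range m).image κ ∪ (range k).image θ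
  have hκm : κ m ∉ s := by simp [s, hκ.eq_iff, fun i => hne i m]
  have hθk : θ k ∉ s := by simp [s, hθ.eq_iff, fun j => (hne k j).symm]
  have hκs : (range (m + 1)).image κ ∪ (range k).image θ = insert (κ m) s := by
    rw [range_add_one, image_insert, insert_union]
  have hθs : (range m).image κ ∪ (range (k + 1)).image θ = insert (θ k) s := by
    rw [range_add_one, image_insert, union_insert]
  have hκθs : (range (m + 1)).image κ ∪ (range (k + 1)).image θ =
      insert (κ m) (insert (θ k) s) := by
    rw [range_add_one (n := m), image_insert, insert_union, hθs]
  rw [hκs] at hκB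
  rw [hθs] at hθB
  rw [hκθs, two_mul]
  refine (norm_symmDivDiff_insert_insert_le h hκm hθk hd ?_).trans (by gcongr)
  rw [← dist_eq_norm, dist_comm]
  exact hsep k m

theorem norm_symmDivDiff_union_le {θ κ : ℕ → K} {h : K → K} {c d A : ℝ}
    (hθ : Injective θ) (hκ : Injective κ) (hd : 0 < d) (hsep : ∀ i j, d ≤ dist (θ i) (κ j))
    (hA : 1 ≤ A) (hAd : 2 ≤ A * d) (hc : 1 ≤ c) (hh : ∀ i, ‖h (θ i)‖ ≤ 1)
    (hκc : ∀ m, ‖symmDivDiff ((range m).image κ) h‖ ≤ c * A ^ m) (m k : ℕ) :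
    ‖symmDivDiff ((range m).image κ ∪ (range k).image θ) h‖ ≤
      c * A ^ (m + k) * prefixWeight θ k := by
  induction k generalizing m with
  | zero => simpa [prefixWeight_zero] using hκc m
  | succ k ihk =>
    have hC := one_le_prefixWeight θ (k + 1)
    induction m with
    | zero =>
      rw [range_zero, image_empty, empty_union, zero_add]
      exact (norm_symmDivDiff_image_le_prefixWeight hh _).trans
        (le_mul_of_one_le_left (by positivity) (one_le_mul_of_one_le_of_one_le hc (one_le_pow₀ hA)))
    | succ m ihm =>
      have hle : c * A ^ (m + 1 + k) * prefixWeight θ k ≤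
          c * A ^ (m + (k + 1)) * prefixWeight θ (k + 1) := by
        rw [show m + 1 + k = m + (k + 1) by omega]
        gcongr
        exact prefixWeight_le_succ θ k
      have hX : 0 ≤ c * A ^ (m + (k + 1)) * prefixWeight θ (k + 1) := by positivity
      refine (norm_symmDivDiff_union_succ_succ_le hθ hκ hd hsep
        ((ihk (m + 1)).trans hle) ihm).trans ?_
      rw [div_le_iff₀ hd, show m + 1 + (k + 1) = m + (k + 1) + 1 by omega, pow_succ]
      nlinarith [mul_le_mul_of_nonneg_right hAd hX]

end Norm

section Merge

variable (P : ℕ → Prop) [DecidablePred P]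

theorem Nat.count_add_count_not (M : ℕ) : Nat.count P M + Nat.count (fun j => ¬ P j) M = M := by
  induction M with
  | zero => simp
  | succ M ih => by_cases hM : P M <;> simp [Nat.count_succ, hM] <;> omega

/-- `P` marks the positions of the `θ`'s in the merged sequence `merge P θ κ`; `mergeIndex P`
sends a position to the index of the same term in the interleaving `κ₀, θ₀, κ₁, θ₁, …`. -/
def mergeIndex (j : ℕ) : ℕ :=
  if P j then 2 * Nat.count P j + 1 else 2 * Nat.count (fun i => ¬ P i) j

def merge {α : Type*} (θ κ : ℕ → α) (j : ℕ) : α :=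
  if P j then θ (Nat.count P j) else κ (Nat.count (fun i => ¬ P i) j)

variable {P}

theorem bijective_mergeIndex (hP : {j | P j}.Infinite) (hP' : {j | ¬ P j}.Infinite) :
    Bijective (mergeIndex P) := by
  constructor
  · intro i j hij
    by_cases hi : P i <;> by_cases hj : P j <;>
      simp only [mergeIndex, hi, hj, if_true, if_false] at hij
    · exact Nat.count_injective hi hj (by omega)
    · omega
    · omega
    · exact Nat.count_injective (p := fun i => ¬ P i) hi hj (by omega)
  · intro n
    obtain ⟨k, rfl | rfl⟩ := Nat.even_or_odd' n
    · refine ⟨Nat.nth (fun i => ¬ P i) k, ?_⟩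
      rw [mergeIndex, if_neg (Nat.nth_mem_of_infinite hP' k), Nat.count_nth_of_infinite hP']
    · refine ⟨Nat.nth P k, ?_⟩
      rw [mergeIndex, if_pos (Nat.nth_mem_of_infinite hP k), Nat.count_nth_of_infinite hP]

theorem comp_mergeIndex {α : Type*} {θ κ η : ℕ → α}
    (hη : ∀ k, η k = if k % 2 = 0 then κ (k / 2) else θ (k / 2)) :
    η ∘ mergeIndex P = merge P θ κ := by
  funext j
  by_cases hj : P j <;> simp only [comp_apply, mergeIndex, merge, hη, hj, if_true, if_false]
  · rw [if_neg (by omega), show (2 * Nat.count P j + 1) / 2 = Nat.count P j by omega]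
  · rw [if_pos (by omega), Nat.mul_div_cancel_left _ two_pos]

theorem injective_merge {α : Type*} {θ κ : ℕ → α} (hθ : Injective θ) (hκ : Injective κ)
    (hne : ∀ i j, θ i ≠ κ j) : Injective (merge P θ κ) := by
  intro i j hij
  by_cases hi : P i <;> by_cases hj : P j <;> simp only [merge, hi, hj, if_true, if_false] at hij
  · exact Nat.count_injective hi hj (hθ hij)
  · exact absurd hij (hne _ _)
  · exact absurd hij.symm (hne _ _)
  · exact Nat.count_injective (p := fun i => ¬ P i) hi hj (hκ hij)

theorem image_merge_range {α : Type*} [DecidableEq α] (θ κ : ℕ → α) (M : ℕ) :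
    (range M).image (merge P θ κ) =
      (range (Nat.count (fun j => ¬ P j) M)).image κ ∪ (range (Nat.count P M)).image θ := by
  induction M with
  | zero => simp
  | succ M ih =>
    by_cases hM : P M
    · simp [range_add_one, Nat.count_succ, hM, merge, ih, union_insert]
    · simp [range_add_one, Nat.count_succ, hM, merge, ih, insert_union]

end Merge

theorem Nat.count_mem_range_of_strictMono {n : ℕ → ℕ} (hn : StrictMono n)
    [DecidablePred (· ∈ Set.range n)] (k : ℕ) : Nat.count (· ∈ Set.range n) (n k) = k := by
  have himage : {j ∈ range (n k) | j ∈ Set.range n} = (range k).image n := by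
    ext j
    simp only [mem_filter, mem_range, Set.mem_range, mem_image]
    constructor
    · rintro ⟨hj, i, rfl⟩
      exact ⟨i, hn.lt_iff_lt.1 hj, rfl⟩
    · rintro ⟨i, hi, rfl⟩
      exact ⟨hn hi, i, rfl⟩
  rw [Nat.count_eq_card_filter_range, himage, Finset.card_image_of_injective _ hn.injective,
    card_range]

open Classical in
theorem exists_infinite_coinfinite_count_le (g : ℕ → ℝ) {A : ℝ} (hA : 1 < A) (hg : g 0 ≤ 1) :
    ∃ P : ℕ → Prop, {j | P j}.Infinite ∧ {j | ¬ P j}.Infinite ∧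
      ∀ M, g (Nat.count P M) ≤ A ^ M := by
  choose N hN using fun k => pow_unbounded_of_one_lt (g (k + 1)) hA
  set n : ℕ → ℕ := fun k => 2 * ∑ i ∈ range (k + 1), (N i + 1)
  have hn : StrictMono n := strictMono_nat_of_lt_succ fun k => by
    simp only [n, sum_range_succ _ (k + 1)]
    omega
  have hNn : ∀ k, N k ≤ n k := fun k => by
    have := single_le_sum (f := fun i => N i + 1) (fun _ _ => Nat.zero_le _) (self_mem_range_succ k)
    simp only [n]
    omega
  refine ⟨(· ∈ Set.range n), Set.infinite_range_of_injective hn.injective, ?_, fun M => ?_⟩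
  · refine Set.infinite_of_injective_forall_mem (f := fun i => 2 * i + 1)
      (fun i j hij => by simpa using hij) fun i ⟨k, hk⟩ => ?_
    simp only [n] at hk
    omega
  induction M with
  | zero => simpa using hg
  | succ M ih =>
    by_cases hM : M ∈ Set.range n
    · obtain ⟨k, rfl⟩ := hM
      rw [Nat.count_succ, if_pos ⟨k, rfl⟩, Nat.count_mem_range_of_strictMono hn]
      exact (hN k).le.trans (pow_le_pow_right₀ hA.le (by linarith [hNn k]))
    · rw [Nat.count_succ, if_neg hM, add_zero]
      exact ih.trans (pow_le_pow_right₀ hA.le (Nat.le_succ M))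

theorem cond12_merge {θ κ : ℕ → ℂ} {P : ℕ → Prop} [DecidablePred P] {d A : ℝ}
    (hθ : Injective θ) (hκ : Injective κ) (hd : 0 < d) (hsep : ∀ i j, d ≤ dist (θ i) (κ j))
    (hA : 1 ≤ A) (hAd : 2 ≤ A * d)
    (hκA : ∀ p q : ℕ,
      ‖deltaP κ (fun ζ => ((starRingEnd ℂ) ζ / (1 + (Complex.normSq ζ : ℂ))) ^ q) p‖ ≤ A ^ (p + q))
    (hP : ∀ M, prefixWeight θ (Nat.count P M) ≤ A ^ M) :
    Cond12 (merge P θ κ) := by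
  have hne : ∀ i j, θ i ≠ κ j := fun i j => dist_pos.1 (hd.trans_le (hsep i j))
  refine ⟨A ^ 4, pow_pos (zero_lt_one.trans_le hA) 4, fun p q => ?_⟩
  set h : ℂ → ℂ := fun ζ => ((starRingEnd ℂ) ζ / (1 + (Complex.normSq ζ : ℂ))) ^ q
  have hh : ∀ ζ, ‖h ζ‖ ≤ 1 := fun ζ => by
    rw [norm_pow]
    exact pow_le_one₀ (norm_nonneg _) (norm_conj_div_one_add_normSq_le_one ζ)
  rcases Nat.eq_zero_or_pos p with rfl | hp
  · simpa [deltaP, divDiff] using (hh _).trans (one_le_pow₀ (one_le_pow₀ hA))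
  have hκc : ∀ m, ‖symmDivDiff ((range m).image κ) h‖ ≤ A ^ q * A ^ m := by
    rintro (_ | m)
    · simpa [symmDivDiff] using pow_nonneg (zero_le_one.trans hA) q
    · rw [← deltaP_eq_symmDivDiff hκ, ← pow_add]
      exact (hκA m q).trans (pow_le_pow_right₀ hA (by omega))
  rw [deltaP_eq_symmDivDiff (injective_merge hθ hκ hne), image_merge_range]
  calc _ ≤ A ^ q * A ^ (Nat.count (fun j => ¬ P j) (p + 1) + Nat.count P (p + 1)) *
        prefixWeight θ (Nat.count P (p + 1)) :=
        norm_symmDivDiff_union_le hθ hκ hd hsep hA hAd (one_le_pow₀ hA) (fun i => hh _) hκc _ _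
    _ ≤ A ^ q * A ^ (p + 1) * A ^ (p + 1) := by
        rw [add_comm (Nat.count _ _), Nat.count_add_count_not]
        gcongr
        exact hP _
    _ ≤ (A ^ 4) ^ (p + q) := by
        rw [← pow_add, ← pow_add, ← pow_mul]
        exact pow_le_pow_right₀ hA (by omega)

theorem stmt13_general (θ κ : ℕ → ℂ)
    (hθinj : Function.Injective θ) (hκinj : Function.Injective κ)
    (hκ12 : Cond12 κ)
    (hdist : ∃ d : ℝ, 0 < d ∧ ∀ i j, d ≤ dist (θ i) (κ j))
    (η : ℕ → ℂ)
    (hη : ∀ k, η k = if k % 2 = 0 then κ (k / 2) else θ (k / 2)) :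
    ∃ σ₁ : ℕ → ℕ, Function.Bijective σ₁ ∧ Cond12 (η ∘ σ₁) := by
  obtain ⟨d, hd, hsep⟩ := hdist
  obtain ⟨R, hR, hκR⟩ := hκ12
  set A := R + 1 + 2 / d with hA_def
  have h2d : 0 < 2 / d := by positivity
  have hRA : R ≤ A := by linarith
  have hA : 1 < A := by linarith
  have hAd : 2 ≤ A * d := by
    rw [hA_def, add_mul, div_mul_cancel₀ _ hd.ne']
    nlinarith
  obtain ⟨P, hP, hP', hPA⟩ :=
    exists_infinite_coinfinite_count_le (prefixWeight θ) hA (prefixWeight_zero θ).le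
  classical
  refine ⟨mergeIndex P, bijective_mergeIndex hP hP', ?_⟩
  rw [comp_mergeIndex hη]
  exact cond12_merge hθinj hκinj hd hsep hA.le hAd
    (fun p q => (hκR p q).trans (pow_le_pow_left₀ hR.le hRA _)) hPA

/-- Lemma: a permutation of the interleaved sequence satisfying (1.2). -/
theorem stmt13 (θ κ : ℕ → ℂ)
    (hθbdd : ∃ M : ℝ, ∀ j, ‖θ j‖ ≤ M)
    (hθinj : Function.Injective θ) (hκinj : Function.Injective κ)
    (hκ12 : Cond12 κ)
    (hdist : ∃ d : ℝ, 0 < d ∧ ∀ i j, d ≤ dist (θ i) (κ j))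
    (η : ℕ → ℂ)
    (hη : ∀ k, η k = if k % 2 = 0 then κ (k / 2) else θ (k / 2)) :
    ∃ σ₁ : ℕ → ℕ, Function.Bijective σ₁ ∧ Cond12 (η ∘ σ₁) :=
  stmt13_general θ κ hθinj hκinj hκ12 hdist η hη
end

section
/- Let (η_j)_{j≥1} be an injective sequence of complex numbers and let ζ₀ ∈ ℂ be a point of the closure of {η_j : j ≥ 1} such that for every open neighborhood V of ζ₀ and every holomorphic function g : V → ℂ there exists some j with η_j ∈ V and g(η_j) ≠ conj(η_j). Then there exists a strictly increasing sequence of indices (j_k)_{k≥1} such that η_{j_k} → ζ₀ as k → ∞ and the set {η_{j_k} : k ≥ 1} is not locally interpolable by real-analytic curves. -/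
/-! Call a germ `g₀` holomorphic at `ζ₀` *good* if the points of `range η` where `g₀` agrees with
`conj` accumulate at `ζ₀`. If a good germ exists, then `g₀ ζ₀ = conj ζ₀` by continuity, and the
hypothesis applied to `g₀` on ever smaller neighbourhoods yields points where `g₀ ≠ conj`, also
accumulating at `ζ₀`. A subsequence alternating between the two kinds cannot be interpolated: an
interpolating germ would coincide with `g₀` near `ζ₀` by the identity theorem, but it also matches
`conj` at points where `g₀` does not. If no good germ exists, any subsequence converging to `ζ₀`
through points other than `ζ₀` works, since an interpolating germ would be good. -/

open Complex Filter Finset Topology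

open Set ComplexConjugate

section Extraction

variable {X : Type*} [TopologicalSpace X]

theorem frequently_atTop_of_frequently_nhdsNE [T1Space X] {u : ℕ → X} {x : X} {p : X → Prop}
    (h : ∃ᶠ z in 𝓝[≠] x, z ∈ range u ∧ p z) {U : Set X} (hU : U ∈ 𝓝[≠] x) :
    ∃ᶠ i in atTop, p (u i) ∧ u i ∈ U := by
  refine frequently_atTop.2 fun M => ?_
  have hfin : Finite (u '' Set.Iio M) := (Set.finite_Iio M).image u
  obtain ⟨_, ⟨⟨i, rfl⟩, hi⟩, hiU, hiM⟩ :=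
    (h.and_eventually (nhdsNE_of_nhdsNE_sdiff_finite hU hfin)).exists
  exact ⟨i, not_lt.1 fun hlt => hiM ⟨i, hlt, rfl⟩, hi, hiU⟩

theorem exists_strictMono_tendsto_nhdsNE [T1Space X] [FirstCountableTopology X]
    {u : ℕ → X} {x : X} {p : ℕ → X → Prop} (h : ∀ n, ∃ᶠ z in 𝓝[≠] x, z ∈ range u ∧ p n z) :
    ∃ φ : ℕ → ℕ, StrictMono φ ∧ (∀ n, p n (u (φ n))) ∧ Tendsto (u ∘ φ) atTop (𝓝[≠] x) := by
  obtain ⟨s, hs⟩ := (𝓝[≠] x).exists_antitone_basis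
  obtain ⟨φ, hφ, hp⟩ := extraction_forall_of_frequently fun n =>
    frequently_atTop_of_frequently_nhdsNE (h n) (hs.mem n)
  exact ⟨φ, hφ, fun n => (hp n).1, hs.tendsto fun n => (hp n).2⟩

end Extraction

theorem LocallyInterpolable.exists_analyticAt_eventually_eq_conj {u : ℕ → ℂ} {ζ : ℂ}
    (hu : Tendsto u atTop (𝓝 ζ)) (h : LocallyInterpolable (range u)) :
    ∃ g : ℂ → ℂ, AnalyticAt ℂ g ζ ∧ ∀ᶠ k in atTop, g (u k) = conj (u k) := by
  obtain ⟨V, hV, hζV, g, hg, hconj⟩ :=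
    h ζ (mem_closure_of_tendsto hu (.of_forall fun k => mem_range_self k))
  exact ⟨g, hg.analyticAt (hV.mem_nhds hζV),
    (hu.eventually_mem (hV.mem_nhds hζV)).mono fun k hk => (hconj _ ⟨mem_range_self k, hk⟩).symm⟩

theorem not_locallyInterpolable_of_frequently {u : ℕ → ℂ} {ζ : ℂ}
    (hu : Tendsto u atTop (𝓝[≠] ζ)) {g₀ : ℂ → ℂ} (hg₀ : AnalyticAt ℂ g₀ ζ)
    (heq : ∃ᶠ k in atTop, g₀ (u k) = conj (u k)) (hne : ∃ᶠ k in atTop, g₀ (u k) ≠ conj (u k)) :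
    ¬ LocallyInterpolable (range u) := by
  intro h
  obtain ⟨g, hg, hgu⟩ :=
    h.exists_analyticAt_eventually_eq_conj (tendsto_nhds_of_tendsto_nhdsWithin hu)
  have hfreq : ∃ᶠ z in 𝓝[≠] ζ, g z = g₀ z :=
    hu.frequently ((heq.and_eventually hgu).mono fun k hk => hk.2.trans hk.1.symm)
  have hgg₀ : ∀ᶠ k in atTop, g (u k) = g₀ (u k) :=
    (tendsto_nhds_of_tendsto_nhdsWithin hu).eventually
      ((hg.frequently_eq_iff_eventually_eq hg₀).1 hfreq)
  exact hne ((hgu.and hgg₀).mono fun k hk hne_k => hne_k (hk.2.symm.trans hk.1))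

theorem frequently_ne_conj {η : ℕ → ℂ} {ζ₀ : ℂ}
    (hbad : ∀ V : Set ℂ, IsOpen V → ζ₀ ∈ V → ∀ g : ℂ → ℂ, DifferentiableOn ℂ g V →
      ∃ j, η j ∈ V ∧ g (η j) ≠ conj (η j))
    {g : ℂ → ℂ} (hg : AnalyticAt ℂ g ζ₀) (hgζ₀ : g ζ₀ = conj ζ₀) :
    ∃ᶠ z in 𝓝[≠] ζ₀, z ∈ range η ∧ g z ≠ conj z := by
  refine frequently_iff.2 fun {U} hU => ?_
  obtain ⟨W, hW, hζ₀W, hWU⟩ := mem_nhdsWithin.1 hU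
  obtain ⟨j, hjW, hj⟩ := hbad (W ∩ {z | AnalyticAt ℂ g z}) (hW.inter (isOpen_analyticAt ℂ g))
    ⟨hζ₀W, hg⟩ g fun z hz => hz.2.differentiableAt.differentiableWithinAt
  have hjζ₀ : η j ≠ ζ₀ := fun h => hj (h ▸ hgζ₀)
  exact ⟨η j, hWU ⟨hjW.1, hjζ₀⟩, mem_range_self j, hj⟩

theorem stmt19_general (η : ℕ → ℂ) (ζ₀ : ℂ)
    (hbad : ∀ V : Set ℂ, IsOpen V → ζ₀ ∈ V →
      ∀ g : ℂ → ℂ, DifferentiableOn ℂ g V →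
        ∃ j, η j ∈ V ∧ g (η j) ≠ (starRingEnd ℂ) (η j)) :
    ∃ j : ℕ → ℕ, StrictMono j ∧
      Filter.Tendsto (η ∘ j) Filter.atTop (nhds ζ₀) ∧
      ¬ LocallyInterpolable (Set.range (η ∘ j)) := by
  by_cases hgood : ∃ g₀ : ℂ → ℂ, AnalyticAt ℂ g₀ ζ₀ ∧
      ∃ᶠ z in 𝓝[≠] ζ₀, z ∈ range η ∧ g₀ z = conj z
  · obtain ⟨g₀, hg₀, heq⟩ := hgood
    have hg₀ζ₀ : g₀ ζ₀ = conj ζ₀ := tendsto_nhds_unique_of_frequently_eq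
      (hg₀.continuousAt.tendsto.mono_left nhdsWithin_le_nhds)
      (Complex.continuous_conj.tendsto ζ₀ |>.mono_left nhdsWithin_le_nhds) (heq.mono fun _ h => h.2)
    have hne := frequently_ne_conj hbad hg₀ hg₀ζ₀
    obtain ⟨j, hj, hparity, hlim⟩ :=
      exists_strictMono_tendsto_nhdsNE (p := fun n z => (Even n ↔ g₀ z = conj z)) fun n => by
        by_cases hn : Even n
        · exact heq.mono fun z hz => ⟨hz.1, iff_of_true hn hz.2⟩
        · exact hne.mono fun z hz => ⟨hz.1, iff_of_false hn hz.2⟩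
    refine ⟨j, hj, tendsto_nhds_of_tendsto_nhdsWithin hlim,
      not_locallyInterpolable_of_frequently hlim hg₀ ?_ ?_⟩
    · exact frequently_atTop.2 fun M => ⟨2 * M, by omega, (hparity _).1 (even_two_mul M)⟩
    · exact frequently_atTop.2 fun M =>
        ⟨2 * M + 1, by omega, mt (hparity _).2 (Nat.not_even_two_mul_add_one M)⟩
  · obtain ⟨j, hj, -, hlim⟩ := exists_strictMono_tendsto_nhdsNE (p := fun _ _ => True) fun _ =>
      (frequently_ne_conj hbad (g := fun _ => conj ζ₀) analyticAt_const rfl).mono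
        fun z hz => ⟨hz.1, trivial⟩
    refine ⟨j, hj, tendsto_nhds_of_tendsto_nhdsWithin hlim, fun h => hgood ?_⟩
    obtain ⟨g, hg, hgj⟩ :=
      h.exists_analyticAt_eventually_eq_conj (tendsto_nhds_of_tendsto_nhdsWithin hlim)
    exact ⟨g, hg, hlim.frequently (hgj.frequently.mono fun k hk => ⟨mem_range_self _, hk⟩)⟩

/-- Lemma: extraction of a convergent subsequence that is not
locally interpolable by real-analytic curves. -/
theorem stmt19 (η : ℕ → ℂ) (hinj : Function.Injective η)
    (ζ₀ : ℂ) (hζ₀ : ζ₀ ∈ closure (Set.range η))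
    (hbad : ∀ V : Set ℂ, IsOpen V → ζ₀ ∈ V →
      ∀ g : ℂ → ℂ, DifferentiableOn ℂ g V →
        ∃ j, η j ∈ V ∧ g (η j) ≠ (starRingEnd ℂ) (η j)) :
    ∃ j : ℕ → ℕ, StrictMono j ∧
      Filter.Tendsto (η ∘ j) Filter.atTop (nhds ζ₀) ∧
      ¬ LocallyInterpolable (Set.range (η ∘ j)) :=
  stmt19_general η ζ₀ hbad
end
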